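/- The Cygan gauge on the Heisenberg group, defined by ||(ξ,v)||_c = | ‖ξ‖² − iv |^{1/2}, satisfies the triangle-type inequality ||p·q||_c ≤ ||p||_c + ||q||_c for all p, q ∈ H_n, where · denotes the Heisenberg product. -/

import Mathlib

/-!
Write `ζ(ξ, v) = ‖ξ‖² − iv`, so that `cygan = √|ζ|`. The group law gives
`ζ(p·q) = ζ(p) + ζ(q) + 2⟨ξ_p, ξ_q⟩`, and since `‖ξ‖² = Re ζ ≤ |ζ|`, Cauchy–Schwarz bounds the
cross term by `√|ζ(p)| √|ζ(q)|`; hence `|ζ(p·q)| ≤ (√|ζ(p)| + √|ζ(q)|)²`.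
-/

noncomputable def Hmul {m : ℕ} (p q : EuclideanSpace ℂ (Fin m) × ℝ) :
    EuclideanSpace ℂ (Fin m) × ℝ :=
  (p.1 + q.1, p.2 + q.2 + 2 * (inner ℂ q.1 p.1 : ℂ).im)

/-- The Cygan gauge `||(ξ,v)||_c = | ‖ξ‖² − iv |^{1/2}` on the Heisenberg group. -/
noncomputable def cygan {m : ℕ} (p : EuclideanSpace ℂ (Fin m) × ℝ) : ℝ :=
  Real.sqrt (‖((‖p.1‖ ^ 2 : ℝ) : ℂ) - p.2 * Complex.I‖)

open Complex

theorem Complex.sqrt_norm_add_add_two_mul_le {a b w : ℂ}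
    (hw : ‖w‖ ≤ √‖a‖ * √‖b‖) : √‖a + b + 2 * w‖ ≤ √‖a‖ + √‖b‖ := by
  refine Real.sqrt_le_left (by positivity) |>.mpr ?_
  calc ‖a + b + 2 * w‖ ≤ ‖a‖ + ‖b‖ + 2 * ‖w‖ := by
        grw [norm_add_le, norm_add_le, norm_mul, RCLike.norm_ofNat]
    _ ≤ (√‖a‖ + √‖b‖) ^ 2 := by
        rw [add_sq, Real.sq_sqrt (norm_nonneg a), Real.sq_sqrt (norm_nonneg b)]
        linarith

section Cygan

variable {m : ℕ} (p q : EuclideanSpace ℂ (Fin m) × ℝ)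

noncomputable def cyganCoord : ℂ := ((‖p.1‖ ^ 2 : ℝ) : ℂ) - p.2 * I

theorem cygan_eq_sqrt_norm_cyganCoord : cygan p = √‖cyganCoord p‖ := rfl

theorem cyganCoord_Hmul :
    cyganCoord (Hmul p q) = cyganCoord p + cyganCoord q + 2 * inner ℂ p.1 q.1 := by
  have hnorm : ‖p.1 + q.1‖ ^ 2 = ‖p.1‖ ^ 2 + 2 * (inner ℂ p.1 q.1).re + ‖q.1‖ ^ 2 := by
    simpa using norm_add_sq (𝕜 := ℂ) p.1 q.1
  have him : (inner ℂ q.1 p.1).im = -(inner ℂ p.1 q.1).im := by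
    rw [← inner_conj_symm q.1 p.1, conj_im]
  rw [cyganCoord, cyganCoord, cyganCoord, Hmul, him, hnorm]
  conv_rhs => rw [← re_add_im (inner ℂ p.1 q.1)]
  push_cast
  ring

theorem norm_sq_le_norm_cyganCoord : ‖p.1‖ ^ 2 ≤ ‖cyganCoord p‖ := by
  have hre : (cyganCoord p).re = ‖p.1‖ ^ 2 := by simp [cyganCoord, -ofReal_pow]
  exact hre ▸ re_le_norm _

theorem norm_le_cygan : ‖p.1‖ ≤ cygan p :=
  Real.le_sqrt_of_sq_le (norm_sq_le_norm_cyganCoord p)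

end Cygan

theorem cygan_gauge_triangle_general (n : ℕ)
    (p q : EuclideanSpace ℂ (Fin (n-1)) × ℝ) :
    cygan (Hmul p q) ≤ cygan p + cygan q := by
  have hcross : ‖(inner ℂ p.1 q.1 : ℂ)‖ ≤ cygan p * cygan q :=
    (norm_inner_le_norm p.1 q.1).trans <|
      mul_le_mul (norm_le_cygan p) (norm_le_cygan q) (norm_nonneg _) (Real.sqrt_nonneg _)
  rw [cygan_eq_sqrt_norm_cyganCoord, cyganCoord_Hmul]
  exact Complex.sqrt_norm_add_add_two_mul_le hcross

/-- the Cygan gauge satisfies the triangle-type inequality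
`||p·q||_c ≤ ||p||_c + ||q||_c` for the Heisenberg product. -/
theorem cygan_gauge_triangle (n : ℕ) (hn : 2 ≤ n)
    (p q : EuclideanSpace ℂ (Fin (n-1)) × ℝ) :
    cygan (Hmul p q) ≤ cygan p + cygan q :=
  cygan_gauge_triangle_general n p q
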